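/- Let x, y ∈ ℝ^n_{≥0} with equal total sums Σ_{i∈[n]} x(i) = Σ_{i∈[n]} y(i), and suppose the prefix sums satisfy Σ_{i∈[k]} x(i) ≤ Σ_{i∈[k]} y(i) for all k ∈ [n]. Then Hx ⪰ Hy, where H ∈ ℝ^{n×n} is the matrix H(i,j) = 1{i ≥ j}/(n − j + 1). -/

import Mathlib

open Finset MeasureTheory

/-- A request sequence with `n` offline nodes and `m` online nodes: each online
node `t` has a nonempty neighborhood `N t ⊆ [n]` and a positive quantity `q t`. -/
structure ReqSeq (n m : ℕ) where
  N : Fin m → Finset (Fin n)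
  q : Fin m → ℝ
  N_nonempty : ∀ t, (N t).Nonempty
  q_pos : ∀ t, 0 < q t

/-- `Δ(N, q)`: feasible allocations for a single online node. -/
def allocSet (n : ℕ) (N : Finset (Fin n)) (qt : ℝ) : Set (Fin n → ℝ) :=
  {x | (∀ i, 0 ≤ x i) ∧ (∀ i, i ∉ N → x i = 0) ∧ ∑ i, x i = qt}

/-- A feasible allocation trajectory on a request sequence. -/
def Feasible {n m : ℕ} (E : ReqSeq n m) (x : Fin m → Fin n → ℝ) : Prop :=
  ∀ t, x t ∈ allocSet n (E.N t) (E.q t)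

/-- `Δ(E)`: the Minkowski sum of the per-node allocation sets (feasible load vectors). -/
def loads {n m : ℕ} (E : ReqSeq n m) : Set (Fin n → ℝ) :=
  {ℓ | ∃ x, Feasible E x ∧ ℓ = ∑ t, x t}

/-- Sum of the `k` largest entries of `x`. -/
noncomputable def topSum {n : ℕ} (x : Fin n → ℝ) (k : ℕ) : ℝ :=
  sSup ((fun s : Finset (Fin n) => ∑ i ∈ s, x i) '' {s | s.card = k})

/-- `Majorizes x y` means `x ⪰ y`: equal total sums and every `k`-largest-entries
sum of `x` dominates that of `y`. -/
def Majorizes {n : ℕ} (x y : Fin n → ℝ) : Prop :=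
  (∑ i, x i = ∑ i, y i) ∧ ∀ k ≤ n, topSum y k ≤ topSum x k

/-- `f` is Schur-concave on the nonnegative orthant: `x ⪯ y → f x ≥ f y`. -/
def SchurConcave {n : ℕ} (f : (Fin n → ℝ) → ℝ) : Prop :=
  ∀ x y : Fin n → ℝ, (∀ i, 0 ≤ x i) → (∀ i, 0 ≤ y i) → Majorizes y x → f y ≤ f x

/-- `g` is Schur-convex on the nonnegative orthant: `x ⪯ y → g x ≤ g y`. -/
def SchurConvex {n : ℕ} (g : (Fin n → ℝ) → ℝ) : Prop :=
  ∀ x y : Fin n → ℝ, (∀ i, 0 ≤ x i) → (∀ i, 0 ≤ y i) → Majorizes y x → g x ≤ g y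

/-- Cumulative load strictly before online node `t`. -/
def prevLoad {n m : ℕ} (x : Fin m → Fin n → ℝ) (t : Fin m) : Fin n → ℝ :=
  fun i => ∑ s ∈ Finset.univ.filter (fun s => s < t), x s i

/-- Minimum of `v` over the neighborhood of online node `t`. -/
noncomputable def reqMinOn {n m : ℕ} (E : ReqSeq n m) (t : Fin m) (v : Fin n → ℝ) : ℝ :=
  (E.N t).inf' (E.N_nonempty t) v

/-- `x` is the water-filling allocation trajectory on `E`: at each arrival `t`,
`x t` maximizes the minimum post-allocation load over `N t`. -/
def IsWFAlloc {n m : ℕ} (E : ReqSeq n m) (x : Fin m → Fin n → ℝ) : Prop :=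
  Feasible E x ∧
  ∀ t, ∀ y ∈ allocSet n (E.N t) (E.q t),
    reqMinOn E t (fun i => y i + prevLoad x t i) ≤ reqMinOn E t (fun i => x t i + prevLoad x t i)

-- The load vector produced by water-filling (via choice; the trajectory exists and is unique).
open Classical in
noncomputable def wfLoad {n m : ℕ} (E : ReqSeq n m) : Fin n → ℝ :=
  if h : ∃ x, IsWFAlloc E x then ∑ t, h.choose t else 0

/-- `ℓ` is the majorization-minimal element of `Δ(E)`. -/
def IsOpt {n m : ℕ} (E : ReqSeq n m) (ℓ : Fin n → ℝ) : Prop :=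
  ℓ ∈ loads E ∧ ∀ ℓ' ∈ loads E, Majorizes ℓ' ℓ

-- `OPT(E)`, the majorization-minimal feasible load vector (via choice).
open Classical in
noncomputable def optLoad {n m : ℕ} (E : ReqSeq n m) : Fin n → ℝ :=
  if h : ∃ ℓ, IsOpt E ℓ then h.choose else 0

/-- A request sequence is nested if `N 1 ⊇ N 2 ⊇ ⋯ ⊇ N m`. -/
def IsNested {n m : ℕ} (E : ReqSeq n m) : Prop :=
  ∀ s t : Fin m, s ≤ t → E.N t ⊆ E.N s

/-- `E_{n,m,q}`: request sequences with total quantity `q`. -/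
def seqs (n m : ℕ) (q : ℝ) : Set (ReqSeq n m) := {E | ∑ t, E.q t = q}

/-- The harmonic-series matrix applied to a vector: `(Hℓ)(i) = Σ_{j ≤ i} ℓ(j)/(n − j + 1)`
(in 1-indexed notation). -/
noncomputable def Hvec (n : ℕ) (ℓ : Fin n → ℝ) : Fin n → ℝ :=
  fun i => ∑ j ∈ Finset.univ.filter (fun j => j ≤ i), ℓ j / ((n - (j : ℕ) : ℕ) : ℝ)

/-- The water-filling height of online node `t`: the common post-allocation load of
the offline nodes in the support of `x t`. -/
noncomputable def height {n m : ℕ} (x : Fin m → Fin n → ℝ) (t : Fin m) : ℝ :=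
  sSup {c | ∃ i, 0 < x t i ∧ c = x t i + prevLoad x t i}

/-! For nonnegative `y` the vector `Hy` is nondecreasing, so its `k` largest entries are its last
`k` ones, whose sum is `∑ j, w j * y j` with the nondecreasing weights `w j = min 1 (k / (n - j))`.
The same expression in `x` is the sum of the last `k` entries of `Hx`, hence at most its top-`k`
sum. Finally `∑ j, w j * y j ≤ ∑ j, w j * x j` by Abel summation: `x` has the same total as `y`
but smaller prefix sums, so it puts more mass where `w` is large. -/

theorem Fin.card_filter_le_val (n m : ℕ) : #{i : Fin n | m ≤ (i : ℕ)} = n - m := by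
  have h := card_filter_add_card_filter_not (s := univ) (fun i : Fin n => (i : ℕ) < m)
  simp only [Fin.card_filter_val_lt, not_lt, card_univ, Fintype.card_fin] at h
  omega

theorem Fin.card_filter_sub_le_val {n k : ℕ} (hk : k ≤ n) :
    #{i : Fin n | n - k ≤ (i : ℕ)} = k := by
  rw [Fin.card_filter_le_val]
  omega

theorem Fin.sum_filter_val_lt_castSucc {M : Type*} [AddCommMonoid M] {n k : ℕ} (hk : k ≤ n)
    (f : Fin (n + 1) → M) :
    ∑ i ∈ univ.filter (fun i : Fin n => (i : ℕ) < k), f i.castSucc =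
      ∑ i ∈ univ.filter (fun i : Fin (n + 1) => (i : ℕ) < k), f i := by
  simp [sum_filter, Fin.sum_univ_castSucc, hk.not_gt]

theorem Fin.cast_sub_val_pos {n : ℕ} (j : Fin n) : (0 : ℝ) < ((n - (j : ℕ) : ℕ) : ℝ) :=
  Nat.cast_pos.2 (Nat.sub_pos_of_lt j.isLt)

theorem sum_mul_nonneg_of_antitone {n : ℕ} {d z : Fin n → ℝ} (hd : Antitone d)
    (hd₀ : ∀ i, 0 ≤ d i)
    (hz : ∀ k ≤ n, 0 ≤ ∑ i ∈ univ.filter (fun i : Fin n => (i : ℕ) < k), z i) :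
    0 ≤ ∑ i, d i * z i := by
  induction n with
  | zero => simp
  | succ n ih =>
    set c := d (Fin.last n)
    have hrest : 0 ≤ ∑ i : Fin n, (d i.castSucc - c) * z i.castSucc :=
      ih (fun i j hij => by simpa using hd (Fin.castSucc_le_castSucc_iff.2 hij))
        (fun i => sub_nonneg.2 (hd (Fin.le_last _)))
        (fun k hk => by simpa [Fin.sum_filter_val_lt_castSucc hk] using hz k (by omega))
    have htotal : 0 ≤ ∑ i, z i := by
      have h := hz (n + 1) le_rfl
      rwa [filter_true_of_mem fun i _ => i.isLt] at h
    have hsplit : ∑ i, d i * z i =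
        ∑ i : Fin n, (d i.castSucc - c) * z i.castSucc + c * ∑ i, z i := by
      simp only [Fin.sum_univ_castSucc, sub_mul, sum_sub_distrib, mul_add, mul_sum]
      ring
    rw [hsplit]
    exact add_nonneg hrest (mul_nonneg (hd₀ _) htotal)

theorem sum_mul_le_sum_mul_of_monotone {n : ℕ} {w x y : Fin n → ℝ} (hw : Monotone w)
    (hsum : ∑ i, x i = ∑ i, y i)
    (hpre : ∀ k ≤ n, ∑ i ∈ univ.filter (fun i : Fin n => (i : ℕ) < k), x i ≤
      ∑ i ∈ univ.filter (fun i : Fin n => (i : ℕ) < k), y i) :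
    ∑ i, w i * y i ≤ ∑ i, w i * x i := by
  obtain ⟨C, hC⟩ := (Set.finite_range w).bddAbove
  have h := sum_mul_nonneg_of_antitone (d := fun i => C - w i) (z := fun i => y i - x i)
    (fun i j hij => sub_le_sub_left (hw hij) C) (fun i => sub_nonneg.2 (hC ⟨i, rfl⟩))
    (fun k hk => by simpa [sum_sub_distrib] using hpre k hk)
  simp only [sub_mul, mul_sub, sum_sub_distrib, ← mul_sum, hsum] at h
  linarith

theorem sum_le_sum_of_card_eq {ι M : Type*} [DecidableEq ι] [AddCommMonoid M] [PartialOrder M]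
    [IsOrderedAddMonoid M] {f : ι → M} {s t : Finset ι} (hst : #s = #t) (m : M)
    (hs : ∀ i ∈ s \ t, f i ≤ m) (ht : ∀ i ∈ t \ s, m ≤ f i) :
    ∑ i ∈ s, f i ≤ ∑ i ∈ t, f i :=
  calc ∑ i ∈ s, f i = ∑ i ∈ s ∩ t, f i + ∑ i ∈ s \ t, f i := (sum_inter_add_sum_sdiff s t f).symm
    _ ≤ ∑ i ∈ t ∩ s, f i + #(t \ s) • m := by
      rw [inter_comm, ← card_sdiff_comm hst]
      gcongr
      exact sum_le_card_nsmul _ _ _ hs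
    _ ≤ ∑ i ∈ t ∩ s, f i + ∑ i ∈ t \ s, f i := by
      gcongr
      exact card_nsmul_le_sum _ _ _ ht
    _ = ∑ i ∈ t, f i := sum_inter_add_sum_sdiff t s f

theorem sum_le_topSum {n k : ℕ} (v : Fin n → ℝ) {s : Finset (Fin n)} (hs : #s = k) :
    ∑ i ∈ s, v i ≤ topSum v k :=
  le_csSup ((Set.toFinite _).image _).bddAbove ⟨s, hs, rfl⟩

theorem topSum_eq_sum_of_monotone {n k : ℕ} {v : Fin n → ℝ} (hv : Monotone v) (hk : k ≤ n) :
    topSum v k = ∑ i ∈ univ.filter (fun i : Fin n => n - k ≤ (i : ℕ)), v i := by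
  set T := univ.filter (fun i : Fin n => n - k ≤ (i : ℕ))
  have hT : #T = k := Fin.card_filter_sub_le_val hk
  refine le_antisymm (csSup_le ⟨_, T, hT, rfl⟩ ?_) (sum_le_topSum v hT)
  rintro _ ⟨s, hs, rfl⟩
  obtain rfl | hk₀ := k.eq_zero_or_pos
  · simp [card_eq_zero.1 hs, card_eq_zero.1 hT]
  refine sum_le_sum_of_card_eq (hs.trans hT.symm) (v ⟨n - k, by omega⟩) ?_ ?_
  · intro i hi
    simp only [T, mem_sdiff, mem_filter, mem_univ, true_and, not_le] at hi
    exact hv (Fin.le_def.2 (show (i : ℕ) ≤ n - k by omega))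
  · intro i hi
    simp only [T, mem_sdiff, mem_filter, mem_univ, true_and] at hi
    exact hv (Fin.le_def.2 hi.1)

theorem monotone_Hvec {n : ℕ} {ℓ : Fin n → ℝ} (hℓ : ∀ i, 0 ≤ ℓ i) : Monotone (Hvec n ℓ) :=
  fun _ _ hii' => sum_le_sum_of_subset_of_nonneg
    (monotone_filter_right _ fun _ _ hji => le_trans hji hii')
    (fun j _ _ => div_nonneg (hℓ j) (Nat.cast_nonneg _))

theorem sum_Hvec (n : ℕ) (ℓ : Fin n → ℝ) (A : Finset (Fin n)) :
    ∑ i ∈ A, Hvec n ℓ i = ∑ j, #(A.filter (j ≤ ·)) * (ℓ j / ((n - (j : ℕ) : ℕ) : ℝ)) := by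
  unfold Hvec
  rw [sum_comm' (t' := univ) (s' := fun j => A.filter (j ≤ ·)) (fun _ _ => by simp [and_comm])]
  simp [sum_const, nsmul_eq_mul]

theorem sum_Hvec_univ (n : ℕ) (ℓ : Fin n → ℝ) : ∑ i, Hvec n ℓ i = ∑ i, ℓ i := by
  rw [sum_Hvec]
  refine sum_congr rfl fun j _ => ?_
  have hcard : #(univ.filter (j ≤ ·)) = n - (j : ℕ) := by
    simp_rw [Fin.le_def]
    exact Fin.card_filter_le_val n j
  rw [hcard, mul_div_cancel₀ _ (Fin.cast_sub_val_pos j).ne']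

/-- The total weight `∑_{i ≥ n - k} H(i, j)` of the last `k` rows of `H` in column `j`. -/
noncomputable def tailWeight (n k : ℕ) (j : Fin n) : ℝ := min 1 (k / ((n - (j : ℕ) : ℕ) : ℝ))

theorem monotone_tailWeight (n k : ℕ) : Monotone (tailWeight n k) := by
  intro j j' hjj'
  have hle : ((n - (j' : ℕ) : ℕ) : ℝ) ≤ ((n - (j : ℕ) : ℕ) : ℝ) := by
    gcongr
    exact Fin.le_def.1 hjj'
  exact min_le_min_left 1
    (div_le_div_of_nonneg_left (Nat.cast_nonneg k) (Fin.cast_sub_val_pos j') hle)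

theorem sum_tail_Hvec {n k : ℕ} (hk : k ≤ n) (ℓ : Fin n → ℝ) :
    ∑ i ∈ univ.filter (fun i : Fin n => n - k ≤ (i : ℕ)), Hvec n ℓ i =
      ∑ j, tailWeight n k j * ℓ j := by
  rw [sum_Hvec]
  refine sum_congr rfl fun j _ => ?_
  have hcard : #((univ.filter (fun i : Fin n => n - k ≤ (i : ℕ))).filter (j ≤ ·)) =
      min k (n - (j : ℕ)) := by
    rw [filter_filter]
    simp only [Fin.le_def, ← max_le_iff, Fin.card_filter_le_val]
    omega
  have hpos := Fin.cast_sub_val_pos j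
  rw [hcard, tailWeight, Nat.cast_min, ← div_self hpos.ne', min_div_div_right hpos.le,
    min_comm (k : ℝ)]
  ring

theorem H_is_majorizing_transform_general (n : ℕ) (x y : Fin n → ℝ)
    (hy : ∀ i, 0 ≤ y i)
    (hsum : ∑ i, x i = ∑ i, y i)
    (hpre : ∀ k : ℕ, k ≤ n →
      ∑ i ∈ Finset.univ.filter (fun i : Fin n => (i : ℕ) < k), x i ≤
      ∑ i ∈ Finset.univ.filter (fun i : Fin n => (i : ℕ) < k), y i) :
    Majorizes (Hvec n x) (Hvec n y) := by
  refine ⟨by rw [sum_Hvec_univ, sum_Hvec_univ, hsum], fun k hk => ?_⟩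
  calc topSum (Hvec n y) k = ∑ j, tailWeight n k j * y j := by
        rw [topSum_eq_sum_of_monotone (monotone_Hvec hy) hk, sum_tail_Hvec hk]
    _ ≤ ∑ j, tailWeight n k j * x j :=
        sum_mul_le_sum_mul_of_monotone (monotone_tailWeight n k) hsum hpre
    _ = ∑ i ∈ univ.filter (fun i : Fin n => n - k ≤ (i : ℕ)), Hvec n x i :=
        (sum_tail_Hvec hk x).symm
    _ ≤ topSum (Hvec n x) k := sum_le_topSum _ (Fin.card_filter_sub_le_val hk)

/-- **Proposition (H is a Majorizing Transform).** If `x, y ∈ ℝ^n_{≥0}` have equal total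
sums and the prefix sums of `x` are dominated by those of `y`, then `Hx ⪰ Hy`. -/
theorem H_is_majorizing_transform (n : ℕ) (x y : Fin n → ℝ)
    (hx : ∀ i, 0 ≤ x i) (hy : ∀ i, 0 ≤ y i)
    (hsum : ∑ i, x i = ∑ i, y i)
    (hpre : ∀ k : ℕ, k ≤ n →
      ∑ i ∈ Finset.univ.filter (fun i : Fin n => (i : ℕ) < k), x i ≤
      ∑ i ∈ Finset.univ.filter (fun i : Fin n => (i : ℕ) < k), y i) :
    Majorizes (Hvec n x) (Hvec n y) :=
  H_is_majorizing_transform_general n x y hy hsum hpre
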